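/- The constant function x(t) ≡ 1 is a strongly extreme point of the unit ball of C[0,1], but the identity map is not weak-to-norm continuous at x on the unit ball (x is not a point of continuity). -/

import Mathlib

/-!
`1` is strongly extreme because `max ‖1 + v‖ ‖1 - v‖ = 1 + ‖v‖` in `C(X, ℝ)`, pointwise just
`max |1 + a| |1 - a| = 1 + |a|`.

It is not a point of continuity: the tents `bₖ` of height `1` on the intervals `(k/N, (k+1)/N)`
satisfy `∑ₖ |f bₖ| ≤ ‖f‖` for every functional `f`, since `∑ₖ ±bₖ` has norm at most `1`. For
finitely many functionals and `N` large, pigeonhole gives one `bₖ` on which all of them are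
small, and `1 - 2 bₖ` lies in the unit ball, is weakly close to `1`, and at distance `2` from it.
-/

open Filter Topology Finset

lemma one_add_abs_le_max_abs_one_add_abs_one_sub (a : ℝ) : 1 + |a| ≤ max |1 + a| |1 - a| := by
  rcases le_total 0 a with ha | ha
  · exact le_max_of_le_left (by rw [abs_of_nonneg ha]; exact le_abs_self _)
  · exact le_max_of_le_right (by rw [abs_of_nonpos ha]; exact le_abs_self _)

namespace ContinuousMap

variable {X : Type*} [TopologicalSpace X] [CompactSpace X]

lemma one_add_norm_le_max_norm_one_add_norm_one_sub [Nonempty X] (v : C(X, ℝ)) :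
    1 + ‖v‖ ≤ max ‖1 + v‖ ‖1 - v‖ := by
  rw [← le_sub_iff_add_le', norm_le_of_nonempty]
  intro x
  have hx : max |1 + v x| |1 - v x| ≤ max ‖1 + v‖ ‖1 - v‖ :=
    max_le_max ((1 + v).norm_coe_le_norm x) ((1 - v).norm_coe_le_norm x)
  linarith [one_add_abs_le_max_abs_one_add_abs_one_sub (v x), Real.norm_eq_abs (v x)]

theorem tendsto_norm_zero_of_tendsto_norm_one_add_of_tendsto_norm_one_sub [Nonempty X]
    {ι : Type*} {l : Filter ι} {v : ι → C(X, ℝ)}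
    (hadd : Tendsto (fun n => ‖1 + v n‖) l (𝓝 1)) (hsub : Tendsto (fun n => ‖1 - v n‖) l (𝓝 1)) :
    Tendsto (fun n => ‖v n‖) l (𝓝 0) := by
  refine squeeze_zero (fun n => norm_nonneg _)
    (fun n => le_sub_iff_add_le'.2 (one_add_norm_le_max_norm_one_add_norm_one_sub (v n))) ?_
  simpa using (hadd.max hsub).sub_const 1

/-- Evaluate `f` on `∑ j, ±b j`, with the signs of `f (b j)`. -/
lemma sum_abs_apply_le_opNorm_mul (f : C(X, ℝ) →L[ℝ] ℝ) {ι : Type*} (t : Finset ι)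
    (b : ι → C(X, ℝ)) {C : ℝ} (hC : 0 ≤ C) (hb : ∀ x, ∑ j ∈ t, |b j x| ≤ C) :
    ∑ j ∈ t, |f (b j)| ≤ ‖f‖ * C := by
  set ε : ι → ℝ := fun j => if 0 ≤ f (b j) then 1 else -1
  have hε : ∀ j, |ε j| = 1 := fun j => by by_cases h : 0 ≤ f (b j) <;> simp [ε, h]
  have hεf : ∀ j, ε j * f (b j) = |f (b j)| := fun j => by
    by_cases h : 0 ≤ f (b j)
    · simp [ε, h, abs_of_nonneg h]
    · simp [ε, h, abs_of_neg (not_le.1 h)]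
  set g := ∑ j ∈ t, ε j • b j
  have hg : ‖g‖ ≤ C := by
    refine (norm_le g hC).2 fun x => ?_
    calc ‖g x‖ = |∑ j ∈ t, ε j * b j x| := by simp [g, Real.norm_eq_abs]
      _ ≤ ∑ j ∈ t, |ε j * b j x| := abs_sum_le_sum_abs _ _
      _ = ∑ j ∈ t, |b j x| := by simp only [abs_mul, hε, one_mul]
      _ ≤ C := hb x
  calc ∑ j ∈ t, |f (b j)| = f g := by simp [g, map_sum, hεf]
    _ ≤ ‖f‖ * ‖g‖ := (le_abs_self _).trans (f.le_opNorm g)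
    _ ≤ ‖f‖ * C := by gcongr

end ContinuousMap

noncomputable def tent (u : ℝ) : ℝ := max 0 (1 - |2 * u - 1|)

lemma continuous_tent : Continuous tent := by unfold tent; fun_prop

lemma tent_nonneg (u : ℝ) : 0 ≤ tent u := le_max_left _ _

lemma tent_le_one (u : ℝ) : tent u ≤ 1 :=
  max_le zero_le_one (by linarith [abs_nonneg (2 * u - 1)])

lemma tent_half : tent (1 / 2) = 1 := by norm_num [tent]

lemma mem_Ioo_of_tent_ne_zero {u : ℝ} (hu : tent u ≠ 0) : u ∈ Set.Ioo 0 1 := by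
  contrapose! hu
  rw [Set.mem_Ioo, not_and_or, not_lt, not_lt] at hu
  have : 1 ≤ |2 * u - 1| := by
    rcases hu with h | h
    · rw [abs_of_neg (by linarith)]; linarith
    · rw [abs_of_nonneg (by linarith)]; linarith
  exact max_eq_left (by linarith)

/-- At most one of the translates `tent (u - j)` is nonzero, namely the one with `j = ⌊u⌋`. -/
lemma sum_tent_sub_natCast_le_one (s : Finset ℕ) (u : ℝ) : ∑ j ∈ s, tent (u - j) ≤ 1 := by
  classical
  have hfloor : ∀ j ∈ s, tent (u - j) ≠ 0 → ⌊u⌋ = j := fun j _ hj => by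
    obtain ⟨h0, h1⟩ := mem_Ioo_of_tent_ne_zero hj
    rw [Int.floor_eq_iff]
    push_cast
    constructor <;> linarith
  rw [← sum_filter_of_ne hfloor]
  set S := s.filter fun j : ℕ => ⌊u⌋ = (j : ℤ)
  have hcard : #S ≤ 1 :=
    card_le_one.2 fun a ha b hb => by
      have := (mem_filter.1 ha).2.symm.trans (mem_filter.1 hb).2
      exact_mod_cast this
  calc _ ≤ #S • (1 : ℝ) :=
        sum_le_card_nsmul _ _ _ fun j _ => tent_le_one _
    _ ≤ 1 := by rw [nsmul_eq_mul, mul_one]; exact_mod_cast hcard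

noncomputable def bump (N j : ℕ) : C(Set.Icc (0 : ℝ) 1, ℝ) :=
  ⟨fun t => tent (N * t - j), continuous_tent.comp (by fun_prop)⟩

lemma bump_apply (N j : ℕ) (t : Set.Icc (0 : ℝ) 1) : bump N j t = tent (N * t - j) := rfl

lemma one_le_norm_bump {N j : ℕ} (hj : j < N) : 1 ≤ ‖bump N j‖ := by
  have hN : (0 : ℝ) < N := by exact_mod_cast (j.zero_le.trans_lt hj)
  have hjN : (j : ℝ) + 1 ≤ N := by exact_mod_cast hj
  let t : Set.Icc (0 : ℝ) 1 :=
    ⟨(j + 1 / 2) / N, by positivity, (div_le_one hN).2 (by linarith)⟩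
  calc (1 : ℝ) = ‖bump N j t‖ := by
        rw [bump_apply, show (N : ℝ) * ((j + 1 / 2) / N) - j = 1 / 2 by field_simp; ring,
          tent_half, norm_one]
    _ ≤ ‖bump N j‖ := (bump N j).norm_coe_le_norm t

lemma sum_abs_apply_bump_le (N : ℕ) (f : C(Set.Icc (0 : ℝ) 1, ℝ) →L[ℝ] ℝ) :
    ∑ j ∈ range N, |f (bump N j)| ≤ ‖f‖ := by
  simpa using ContinuousMap.sum_abs_apply_le_opNorm_mul f (range N) (bump N) zero_le_one fun t => by
    simpa only [bump_apply, abs_of_nonneg (tent_nonneg _)] using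
      sum_tent_sub_natCast_le_one (range N) (N * t)

lemma exists_bump_forall_abs_apply_lt (s : Finset (C(Set.Icc (0 : ℝ) 1, ℝ) →L[ℝ] ℝ)) {δ : ℝ}
    (hδ : 0 < δ) : ∃ N j, j < N ∧ ∀ f ∈ s, |f (bump N j)| < δ := by
  obtain ⟨N, hN⟩ := exists_nat_gt ((∑ f ∈ s, ‖f‖) / δ)
  have hsum : ∑ j ∈ range N, ∑ f ∈ s, |f (bump N j)| < ∑ _j ∈ range N, δ :=
    calc _ = ∑ f ∈ s, ∑ j ∈ range N, |f (bump N j)| := sum_comm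
      _ ≤ ∑ f ∈ s, ‖f‖ := sum_le_sum fun f _ => sum_abs_apply_bump_le N f
      _ < N * δ := (div_lt_iff₀ hδ).1 hN
      _ = _ := by simp
  obtain ⟨j, hj, hjδ⟩ := exists_lt_of_sum_lt hsum
  exact ⟨N, j, mem_range.1 hj, fun f hf =>
    (single_le_sum (fun g _ => abs_nonneg (g (bump N j))) hf).trans_lt hjδ⟩

theorem exists_norm_le_one_forall_abs_apply_sub_lt_two_le_norm_sub_one
    (s : Finset (C(Set.Icc (0 : ℝ) 1, ℝ) →L[ℝ] ℝ)) {δ : ℝ} (hδ : 0 < δ) :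
    ∃ y : C(Set.Icc (0 : ℝ) 1, ℝ), ‖y‖ ≤ 1 ∧ (∀ f ∈ s, |f y - f 1| < δ) ∧ 2 ≤ ‖y - 1‖ := by
  obtain ⟨N, j, hj, hsmall⟩ := exists_bump_forall_abs_apply_lt s (half_pos hδ)
  refine ⟨1 - (2 : ℝ) • bump N j, ?_, fun f hf => ?_, ?_⟩
  · refine (ContinuousMap.norm_le _ zero_le_one).2 fun t => ?_
    have h0 := tent_nonneg (N * t - j)
    have h1 := tent_le_one (N * t - j)
    simp only [ContinuousMap.sub_apply, ContinuousMap.smul_apply, ContinuousMap.one_apply,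
      bump_apply, smul_eq_mul, Real.norm_eq_abs, abs_le]
    constructor <;> linarith
  · have := hsmall f hf
    rw [map_sub, map_smul, sub_sub_cancel_left, abs_neg, smul_eq_mul, abs_mul, abs_two]
    linarith
  · rw [sub_sub_cancel_left, norm_neg, norm_smul, Real.norm_two]
    linarith [one_le_norm_bump hj]

theorem stmt9 :
    (∀ v : ℕ → C(Set.Icc (0:ℝ) 1, ℝ),
      Tendsto (fun n => ‖ContinuousMap.const (Set.Icc (0:ℝ) 1) (1 : ℝ) + v n‖) atTop (nhds 1) →
      Tendsto (fun n => ‖ContinuousMap.const (Set.Icc (0:ℝ) 1) (1 : ℝ) - v n‖) atTop (nhds 1) →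
      Tendsto (fun n => ‖v n‖) atTop (nhds 0))
    ∧
    ¬ (∀ ε > (0 : ℝ), ∃ (s : Finset (C(Set.Icc (0:ℝ) 1, ℝ) →L[ℝ] ℝ)) (δ : ℝ), 0 < δ ∧
        ∀ y : C(Set.Icc (0:ℝ) 1, ℝ), ‖y‖ ≤ 1 →
          (∀ f ∈ s, |f y - f (ContinuousMap.const (Set.Icc (0:ℝ) 1) (1 : ℝ))| < δ) →
          ‖y - ContinuousMap.const (Set.Icc (0:ℝ) 1) (1 : ℝ)‖ ≤ ε) := by
  refine ⟨fun v => ContinuousMap.tendsto_norm_zero_of_tendsto_norm_one_add_of_tendsto_norm_one_sub,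
    fun H => ?_⟩
  obtain ⟨s, δ, hδ, hclose⟩ := H 1 one_pos
  obtain ⟨y, hy, hys, hfar⟩ := exists_norm_le_one_forall_abs_apply_sub_lt_two_le_norm_sub_one s hδ
  have hnear : ‖y - 1‖ ≤ 1 := hclose y hy hys
  linarith
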